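/- Let w = (w_i)_{i≥1} be positive reals with partial sums s_i. For the n-node w-WRRT with weight-proportionally chosen node u_n, the height |u_n| of u_n satisfies: |u_n| + 1 is distributed as a sum of n independent Bernoulli random variables with parameters w_1/s_1, w_2/s_2, …, w_n/s_n. Consequently E[|u_n|] + 1 = Σ_{i=1}^n w_i/s_i and Var(|u_n|) = Σ_{i=1}^n (w_i/s_i)(1 − w_i/s_i). -/

import Mathlib

/-!
The ancestor set `D` of `u` is a set `S ∋ 1` exactly when `u = max S` and every `m ∈ S \ {1}`
is attached to the next smaller element of `S`, while the parents of the nodes outside `S` are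
free. Summing the WRRT law over those free parents, the weights `w` of the prescribed parents
recombine into `∏_{i ∈ S} w i` and the normalisations `s (m - 1)` telescope, so that
`P(D = S) = ∏_{i ∈ S} w i / s i * ∏_{i ∉ S} (1 - w i / s i)`. This is the law of the random set
`{i ≤ n | β i = 1}`, hence `|u| + 1 = #D` has the law of `∑ i, β i`, and the mean and variance
are those of a sum of independent Bernoulli variables.
-/

open MeasureTheory ProbabilityTheory Finset
open scoped Classical

def isAnc (p : ℕ → ℕ) (i j : ℕ) : Prop := ∃ k : ℕ, p^[k] j = i

open scoped ENNReal

noncomputable def ancestors (p : ℕ → ℕ) (n j : ℕ) : Finset ℕ :=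
  (Icc 1 n).filter (fun i => isAnc p i j)

def IsParentMap (p : ℕ → ℕ) (n : ℕ) : Prop :=
  p 1 = 1 ∧ ∀ m, 2 ≤ m → m ≤ n → 1 ≤ p m ∧ p m < m

-- `0` when no element of `S` lies below `a`.
def maxBelow (S : Finset ℕ) (a : ℕ) : ℕ := (S.filter (· < a)).sup id

section MaxBelow

variable {S : Finset ℕ} {a b : ℕ}

theorem le_maxBelow (hb : b ∈ S) (hba : b < a) : b ≤ maxBelow S a :=
  le_sup (f := id) (mem_filter.2 ⟨hb, hba⟩)

theorem maxBelow_le {c : ℕ} (h : ∀ b ∈ S, b < a → b ≤ c) : maxBelow S a ≤ c :=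
  Finset.sup_le fun b hb => h b (mem_filter.1 hb).1 (mem_filter.1 hb).2

theorem maxBelow_mem_and_lt (h : maxBelow S a ≠ 0) : maxBelow S a ∈ S ∧ maxBelow S a < a := by
  have hne : (S.filter (· < a)).Nonempty := by
    by_contra hemp
    exact h (by simp [maxBelow, not_nonempty_iff_eq_empty.1 hemp])
  obtain ⟨b, hb, hsup⟩ := exists_mem_eq_sup _ hne id
  rw [maxBelow, hsup]
  exact mem_filter.1 hb

theorem maxBelow_eq_of_forall_le (hb : b ∈ S) (hba : b < a) (h : ∀ c ∈ S, c < a → c ≤ b) :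
    maxBelow S a = b :=
  le_antisymm (maxBelow_le h) (le_maxBelow hb hba)

theorem maxBelow_insert_of_le {j : ℕ} (h : a ≤ j) : maxBelow (insert j S) a = maxBelow S a := by
  rw [maxBelow, filter_insert, if_neg (by omega), maxBelow]

theorem maxBelow_erase_of_le {j : ℕ} (h : a ≤ j) : maxBelow (S.erase j) a = maxBelow S a := by
  rw [maxBelow, filter_erase, erase_eq_of_notMem (by simp; omega), maxBelow]

theorem prod_maxBelow_mul_max' {M : Type*} [CommMonoid M] (f : ℕ → M) (hS : S.Nonempty) :
    (∏ a ∈ S.erase (S.min' hS), f (maxBelow S a)) * f (S.max' hS) = ∏ a ∈ S, f a := by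
  revert hS
  induction S using Finset.induction_on_max with
  | empty => simp
  | insert j T hT ih =>
    intro hS
    rcases T.eq_empty_or_nonempty with rfl | hTne
    · simp
    have hmin_lt : T.min' hTne < j := hT _ (T.min'_mem hTne)
    have hmin : (insert j T).min' hS = T.min' hTne := by
      rw [min'_insert j T hTne, min_eq_right hmin_lt.le]
    have hmax : (insert j T).max' hS = j := by
      rw [max'_insert j T hTne, max_eq_left (hT _ (T.max'_mem hTne)).le]
    rw [hmin, hmax, erase_insert_of_ne hmin_lt.ne',
      prod_insert (fun h => (hT j (mem_of_mem_erase h)).false), maxBelow_insert_of_le le_rfl,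
      maxBelow_eq_of_forall_le (T.max'_mem hTne) (hT _ (T.max'_mem hTne))
        (fun c hc _ => T.le_max' c hc),
      prod_congr rfl fun a ha =>
        congrArg f (maxBelow_insert_of_le (hT a (mem_of_mem_erase ha)).le),
      prod_insert (fun hj => (hT j hj).false), ← ih hTne]
    ac_rfl

end MaxBelow

section Ancestors

variable {p : ℕ → ℕ} {n j : ℕ}

theorem isAnc_iff_eq_or {i : ℕ} : isAnc p i j ↔ i = j ∨ isAnc p i (p j) := by
  constructor
  · rintro ⟨_ | k, hk⟩
    · exact Or.inl hk.symm
    · exact Or.inr ⟨k, hk⟩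
  · rintro (rfl | ⟨k, hk⟩)
    · exact ⟨0, rfl⟩
    · exact ⟨k + 1, hk⟩

theorem ancestors_eq_insert (hj : j ∈ Icc 1 n) :
    ancestors p n j = insert j (ancestors p n (p j)) := by
  ext i
  rw [ancestors, mem_filter, isAnc_iff_eq_or, ancestors, mem_insert, mem_filter]
  constructor
  · rintro ⟨hi, rfl | h⟩ <;> tauto
  · rintro (rfl | ⟨hi, h⟩) <;> tauto

theorem ancestors_one (h1 : p 1 = 1) (hn : 1 ≤ n) : ancestors p n 1 = {1} := by
  ext i
  rw [ancestors, mem_filter, mem_singleton]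
  constructor
  · rintro ⟨-, k, rfl⟩
    exact Function.iterate_fixed h1 k
  · rintro rfl
    exact ⟨mem_Icc.2 ⟨le_rfl, hn⟩, 0, rfl⟩

namespace IsParentMap

theorem one_mem_ancestors (hp : IsParentMap p n) (hj : j ∈ Icc 1 n) : 1 ∈ ancestors p n j := by
  induction j using Nat.strong_induction_on with
  | _ j ih =>
    obtain ⟨hj1, hjn⟩ := mem_Icc.1 hj
    rcases hj1.eq_or_lt with rfl | hj2
    · rw [ancestors_one hp.1 hjn]
      exact mem_singleton_self 1
    · obtain ⟨hpj1, hpj⟩ := hp.2 j hj2 hjn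
      rw [ancestors_eq_insert hj]
      exact mem_insert_of_mem (ih _ hpj (mem_Icc.2 ⟨hpj1, by omega⟩))

theorem ancestors_eq_iff (hp : IsParentMap p n) (hj : j ∈ Icc 1 n) {S : Finset ℕ} :
    ancestors p n j = S ↔
      S ⊆ Icc 1 n ∧ j ∈ S ∧ (∀ b ∈ S, b ≤ j) ∧ ∀ a ∈ S, 2 ≤ a → p a = maxBelow S a := by
  induction j using Nat.strong_induction_on generalizing S with
  | _ j ih =>
    obtain ⟨hj1, hjn⟩ := mem_Icc.1 hj
    rcases hj1.eq_or_lt with rfl | hj2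
    · rw [ancestors_one hp.1 hjn]
      constructor
      · rintro rfl
        simp [hjn]
      · rintro ⟨hSn, h1S, hS1, -⟩
        refine (eq_singleton_iff_unique_mem.2 ⟨h1S, fun b hb => ?_⟩).symm
        have := (mem_Icc.1 (hSn hb)).1
        have := hS1 b hb
        omega
    obtain ⟨hpj1, hpj⟩ := hp.2 j hj2 hjn
    have hpj_mem : p j ∈ Icc 1 n := mem_Icc.2 ⟨hpj1, by omega⟩
    rw [ancestors_eq_insert hj]
    constructor
    · rintro rfl
      obtain ⟨hTn, hpjT, hTle, hTpar⟩ := (ih _ hpj hpj_mem).1 rfl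
      refine ⟨insert_subset hj hTn, mem_insert_self _ _, ?_, ?_⟩
      · intro b hb
        rcases mem_insert.1 hb with rfl | hb
        · exact le_rfl
        · exact (hTle b hb).trans hpj.le
      · intro a ha ha2
        rcases mem_insert.1 ha with rfl | ha
        · rw [maxBelow_insert_of_le le_rfl]
          exact (maxBelow_eq_of_forall_le hpjT hpj fun c hc _ => hTle c hc).symm
        · rw [maxBelow_insert_of_le ((hTle a ha).trans hpj.le), hTpar a ha ha2]
    · rintro ⟨hSn, hjS, hSle, hSpar⟩
      have hmb : p j = maxBelow S j := hSpar j hjS hj2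
      obtain ⟨hpjS, -⟩ := maxBelow_mem_and_lt (a := j) (S := S) (by omega)
      suffices ancestors p n (p j) = S.erase j by rw [this, insert_erase hjS]
      refine (ih _ hpj hpj_mem).2 ⟨(erase_subset j S).trans hSn,
        mem_erase.2 ⟨hpj.ne, hmb ▸ hpjS⟩, fun b hb => ?_, fun a ha ha2 => ?_⟩
      · rw [hmb]
        exact le_maxBelow (mem_of_mem_erase hb) ((hSle b (mem_of_mem_erase hb)).lt_of_ne
          (ne_of_mem_erase hb))
      · rw [maxBelow_erase_of_le (hSle a (mem_of_mem_erase ha)),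
          hSpar a (mem_of_mem_erase ha) ha2]

end IsParentMap

end Ancestors

/-- The parents of `m` that are compatible with `S` being the ancestor set of `max S`. -/
def compatibleParents (S : Finset ℕ) (m : ℕ) : Finset ℕ :=
  if m ∈ S then {maxBelow S m} else Icc 1 (m - 1)

theorem compatibleParents_subset {S : Finset ℕ} {m : ℕ} (hS1 : 1 ∈ S) (hm : 2 ≤ m) :
    compatibleParents S m ⊆ Icc 1 (m - 1) := by
  unfold compatibleParents
  split_ifs
  · have h1 := le_maxBelow hS1 (a := m) (by omega)
    have h2 := (maxBelow_mem_and_lt (S := S) (a := m) (by omega)).2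
    exact singleton_subset_iff.2 (mem_Icc.2 ⟨h1, by omega⟩)
  · exact Subset.rfl

theorem IsParentMap.ancestors_eq_iff_compatibleParents {p : ℕ → ℕ} {n j : ℕ}
    (hp : IsParentMap p n) (hj : j ∈ Icc 1 n) {S : Finset ℕ} (hS1 : 1 ∈ S)
    (hSn : S ⊆ Icc 1 n) :
    ancestors p n j = S ↔
      (∀ m ∈ Icc 2 n, p m ∈ compatibleParents S m) ∧ j = S.max' ⟨1, hS1⟩ := by
  rw [hp.ancestors_eq_iff hj, eq_comm (a := j), S.max'_eq_iff ⟨1, hS1⟩ j]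
  have hpar : (∀ a ∈ S, 2 ≤ a → p a = maxBelow S a) ↔
      ∀ m ∈ Icc 2 n, p m ∈ compatibleParents S m := by
    constructor
    · intro h m hm
      obtain ⟨hm2, hmn⟩ := mem_Icc.1 hm
      unfold compatibleParents
      split_ifs with hmS
      · exact mem_singleton.2 (h m hmS hm2)
      · have := hp.2 m hm2 hmn
        exact mem_Icc.2 ⟨this.1, by omega⟩
    · intro h a haS ha2
      have := h a (mem_Icc.2 ⟨ha2, (mem_Icc.1 (hSn haS)).2⟩)
      rwa [compatibleParents, if_pos haS, mem_singleton] at this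
  rw [← hpar]
  tauto

theorem prod_Icc_one_eq_mul_prod_Icc_two {M : Type*} [CommMonoid M] (f : ℕ → M) {n : ℕ}
    (hn : 1 ≤ n) : ∏ i ∈ Icc 1 n, f i = f n * ∏ m ∈ Icc 2 n, f (m - 1) := by
  induction n, hn using Nat.le_induction with
  | base => simp
  | succ n hn ih =>
    rw [prod_Icc_succ_top (by omega), prod_Icc_succ_top (by omega), ih, Nat.add_sub_cancel]
    ac_rfl

theorem Icc_two_eq_erase_one_union_sdiff {S : Finset ℕ} {n : ℕ} (hS1 : 1 ∈ S)
    (hSn : S ⊆ Icc 1 n) : Icc 2 n = S.erase 1 ∪ (Icc 1 n \ S) := by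
  ext m
  simp only [mem_Icc, mem_union, mem_erase, mem_sdiff]
  by_cases hm : m ∈ S
  · have := mem_Icc.1 (hSn hm)
    simp only [hm, not_true_eq_false, and_false, or_false, and_true]
    omega
  · have : m ≠ 1 := fun h => hm (h ▸ hS1)
    simp only [hm, and_false, not_false_eq_true, and_true, false_or]
    omega

section PartialSums

variable {w s : ℕ → ℝ}

theorem partialSum_nonneg (hw : ∀ i, 1 ≤ i → 0 < w i) (hs : ∀ i, s i = ∑ j ∈ Icc 1 i, w j)
    (i : ℕ) : 0 ≤ s i := by
  rw [hs]
  exact sum_nonneg fun j hj => (hw j (mem_Icc.1 hj).1).le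

theorem partialSum_pos (hw : ∀ i, 1 ≤ i → 0 < w i) (hs : ∀ i, s i = ∑ j ∈ Icc 1 i, w j)
    {i : ℕ} (hi : 1 ≤ i) : 0 < s i := by
  rw [hs]
  exact sum_pos (fun j hj => hw j (mem_Icc.1 hj).1) ⟨1, mem_Icc.2 ⟨le_rfl, hi⟩⟩

theorem partialSum_eq_add (hs : ∀ i, s i = ∑ j ∈ Icc 1 i, w j) {i : ℕ} (hi : 1 ≤ i) :
    s i = s (i - 1) + w i := by
  obtain ⟨k, rfl⟩ : ∃ k, i = k + 1 := ⟨i - 1, by omega⟩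
  rw [hs, hs, sum_Icc_succ_top (by omega), Nat.add_sub_cancel]

theorem one_sub_div_partialSum (hw : ∀ i, 1 ≤ i → 0 < w i)
    (hs : ∀ i, s i = ∑ j ∈ Icc 1 i, w j) {i : ℕ} (hi : 1 ≤ i) :
    1 - w i / s i = s (i - 1) / s i := by
  rw [eq_div_iff (partialSum_pos hw hs hi).ne', sub_mul, one_mul,
    div_mul_cancel₀ _ (partialSum_pos hw hs hi).ne', partialSum_eq_add hs hi]
  ring

theorem div_partialSum_nonneg (hw : ∀ i, 1 ≤ i → 0 < w i)
    (hs : ∀ i, s i = ∑ j ∈ Icc 1 i, w j) {i : ℕ} (hi : 1 ≤ i) : 0 ≤ w i / s i :=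
  div_nonneg (hw i hi).le (partialSum_nonneg hw hs i)

theorem div_partialSum_le_one (hw : ∀ i, 1 ≤ i → 0 < w i)
    (hs : ∀ i, s i = ∑ j ∈ Icc 1 i, w j) {i : ℕ} (hi : 1 ≤ i) : w i / s i ≤ 1 := by
  rw [div_le_one (partialSum_pos hw hs hi), partialSum_eq_add hs hi]
  linarith [partialSum_nonneg hw hs (i - 1)]

theorem prod_maxBelow_div_mul_div_eq (hw : ∀ i, 1 ≤ i → 0 < w i) (hs : ∀ i, s i = ∑ j ∈ Icc 1 i, w j)
    {n : ℕ} {S : Finset ℕ} (hS1 : 1 ∈ S) (hSn : S ⊆ Icc 1 n) :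
    (∏ m ∈ S.erase 1, w (maxBelow S m) / s (m - 1)) * (w (S.max' ⟨1, hS1⟩) / s n)
      = (∏ i ∈ S, w i / s i) * ∏ i ∈ Icc 1 n \ S, (1 - w i / s i) := by
  have hn : 1 ≤ n := (mem_Icc.1 (hSn hS1)).2
  have hmin : S.min' ⟨1, hS1⟩ = 1 :=
    le_antisymm (min'_le _ _ hS1) (le_min' _ _ _ fun b hb => (mem_Icc.1 (hSn hb)).1)
  have hnum : (∏ m ∈ S.erase 1, w (maxBelow S m)) * w (S.max' ⟨1, hS1⟩) = ∏ i ∈ S, w i := by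
    rw [← prod_maxBelow_mul_max' w ⟨1, hS1⟩, hmin]
  have hden : (∏ i ∈ Icc 1 n \ S, s i) * ∏ i ∈ S, s i
      = s n * ((∏ m ∈ S.erase 1, s (m - 1)) * ∏ i ∈ Icc 1 n \ S, s (i - 1)) := by
    rw [prod_sdiff hSn, prod_Icc_one_eq_mul_prod_Icc_two s hn,
      Icc_two_eq_erase_one_union_sdiff hS1 hSn,
      prod_union ((disjoint_sdiff).mono_left (erase_subset 1 S))]
  have hne : ∀ {i}, 1 ≤ i → s i ≠ 0 := fun hi => (partialSum_pos hw hs hi).ne'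
  have hmem : ∀ {T i}, T ⊆ Icc 1 n → i ∈ T → 1 ≤ i := fun hT hi => (mem_Icc.1 (hT hi)).1
  rw [prod_congr rfl fun i hi => one_sub_div_partialSum hw hs (mem_Icc.1 (mem_sdiff.1 hi).1).1,
    prod_div_distrib, prod_div_distrib, prod_div_distrib,
    div_mul_div_comm, div_mul_div_comm, div_eq_div_iff, hnum, mul_comm (∏ i ∈ S, s i), hden]
  · ring
  · refine mul_ne_zero (prod_ne_zero_iff.2 fun m hm => hne ?_) (hne hn)
    have := hmem hSn (mem_of_mem_erase hm)
    have := ne_of_mem_erase hm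
    omega
  · exact mul_ne_zero (prod_ne_zero_iff.2 fun i hi => hne (hmem hSn hi))
      (prod_ne_zero_iff.2 fun i hi => hne (hmem sdiff_subset hi))

theorem sum_compatibleParents (hw : ∀ i, 1 ≤ i → 0 < w i) (hs : ∀ i, s i = ∑ j ∈ Icc 1 i, w j)
    {S : Finset ℕ} {m : ℕ} (hm : 2 ≤ m) :
    ∑ v ∈ compatibleParents S m, w v / s (m - 1) =
      if m ∈ S then w (maxBelow S m) / s (m - 1) else 1 := by
  unfold compatibleParents
  split_ifs
  · exact sum_singleton _ _
  · rw [← sum_div, ← hs, div_self (partialSum_pos hw hs (by omega)).ne']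

end PartialSums

theorem measure_forall_mem_inter_eq_prod_sum {Ω ι α : Type*} [MeasurableSpace Ω]
    [MeasurableSpace α] [MeasurableSingletonClass α] [Inhabited α] {μ : Measure Ω}
    {X : ι → Ω → α} (hX : ∀ i, Measurable (X i)) {E : Set Ω} (hE : MeasurableSet E)
    (I : Finset ι) (B : ι → Finset α) (f : ι → α → ℝ≥0∞) (c : ℝ≥0∞)
    (h : ∀ x : ι → α, (∀ i ∈ I, x i ∈ B i) →
      μ ({ω | ∀ i ∈ I, X i ω = x i} ∩ E) = (∏ i ∈ I, f i (x i)) * c) :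
    μ ({ω | ∀ i ∈ I, X i ω ∈ B i} ∩ E) = (∏ i ∈ I, ∑ v ∈ B i, f i v) * c := by
  let ext (x : ∀ i ∈ I, α) (i : ι) : α := if hi : i ∈ I then x i hi else default
  have hext : ∀ x i (hi : i ∈ I), ext x i = x i hi := fun x i hi => dif_pos hi
  let A (x : ∀ i ∈ I, α) : Set Ω := {ω | ∀ i ∈ I, X i ω = ext x i} ∩ E
  have hcover : {ω | ∀ i ∈ I, X i ω ∈ B i} ∩ E = ⋃ x ∈ I.pi B, A x := by
    ext ω
    simp only [A, Set.mem_inter_iff, Set.mem_ofPred_eq, Set.mem_iUnion, mem_pi]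
    constructor
    · rintro ⟨hB, hωE⟩
      exact ⟨fun i _ => X i ω, hB, fun i hi => (hext (fun i _ => X i ω) i hi).symm, hωE⟩
    · rintro ⟨x, hx, hXx, hωE⟩
      exact ⟨fun i hi => hXx i hi ▸ (hext x i hi).symm ▸ hx i hi, hωE⟩
  have hdisj : (I.pi B : Set (∀ i ∈ I, α)).PairwiseDisjoint A := by
    intro x _ y _ hxy
    refine Set.disjoint_left.2 fun ω hωx hωy => hxy ?_
    funext i hi
    rw [← hext x i hi, ← hext y i hi, ← hωx.1 i hi, ← hωy.1 i hi]
  have hA : ∀ x, MeasurableSet (A x) := fun x => by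
    simp only [A, Set.ofPred_forall]
    exact (MeasurableSet.biInter I.countable_toSet
      fun i _ => hX i (measurableSet_singleton _)).inter hE
  rw [hcover, measure_biUnion_finset hdisj fun x _ => hA x, prod_sum, sum_mul]
  refine sum_congr rfl fun x hx => ?_
  rw [h (ext x) fun i hi => (hext x i hi).symm ▸ mem_pi.1 hx i hi, ← prod_attach I]
  exact congrArg (· * c) (prod_congr rfl fun i _ => by rw [hext x i i.2])

theorem prod_sum_compatibleParents_mul {w s : ℕ → ℝ} (hw : ∀ i, 1 ≤ i → 0 < w i)
    (hs : ∀ i, s i = ∑ j ∈ Icc 1 i, w j) {n : ℕ} {S : Finset ℕ} (hS1 : 1 ∈ S)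
    (hSn : S ⊆ Icc 1 n) :
    (∏ m ∈ Icc 2 n, ∑ v ∈ compatibleParents S m, w v / s (m - 1)) * (w (S.max' ⟨1, hS1⟩) / s n)
      = (∏ i ∈ S, w i / s i) * ∏ i ∈ Icc 1 n \ S, (1 - w i / s i) := by
  have hinter : Icc 2 n ∩ S = S.erase 1 := by
    rw [Icc_two_eq_erase_one_union_sdiff hS1 hSn, union_inter_distrib_right,
      inter_eq_left.2 (erase_subset 1 S), sdiff_inter_self, union_empty]
  rw [prod_congr rfl fun m hm => sum_compatibleParents hw hs (mem_Icc.1 hm).1, prod_ite_mem,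
    hinter, prod_maxBelow_div_mul_div_eq hw hs hS1 hSn]

theorem ENNReal.ofReal_prod_mul_prod_one_sub {ι : Type*} {S T : Finset ι} {p : ι → ℝ}
    (hS : ∀ i ∈ S, 0 ≤ p i) (hT : ∀ i ∈ T, 0 ≤ p i ∧ p i ≤ 1) :
    ENNReal.ofReal ((∏ i ∈ S, p i) * ∏ i ∈ T, (1 - p i))
      = (∏ i ∈ S, ENNReal.ofReal (p i)) * ∏ i ∈ T, (1 - ENNReal.ofReal (p i)) := by
  rw [ENNReal.ofReal_mul (prod_nonneg hS), ENNReal.ofReal_prod_of_nonneg hS,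
    ENNReal.ofReal_prod_of_nonneg fun i hi => sub_nonneg.2 (hT i hi).2]
  refine congrArg _ (prod_congr rfl fun i hi => ?_)
  rw [ENNReal.ofReal_sub 1 (hT i hi).1, ENNReal.ofReal_one]

section WRRT

variable {Ω : Type*} [MeasurableSpace Ω] {par : ℕ → Ω → ℕ} {u : Ω → ℕ} {n : ℕ}

theorem measurable_ancestors (hmeas : ∀ m, Measurable (par m)) (humeas : Measurable u)
    (hpar : ∀ ω, IsParentMap (par · ω) n) (hu : ∀ ω, u ω ∈ Icc 1 n) :
    Measurable fun ω => ancestors (par · ω) n (u ω) := by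
  refine measurable_to_countable' fun S => ?_
  have : (fun ω => ancestors (par · ω) n (u ω)) ⁻¹' {S} = {ω | S ⊆ Icc 1 n ∧ u ω ∈ S ∧
      (∀ b ∈ S, b ≤ u ω) ∧ ∀ a ∈ S, 2 ≤ a → par a ω = maxBelow S a} := by
    ext ω
    exact (hpar ω).ancestors_eq_iff (hu ω)
  rw [this]
  measurability

theorem measure_ancestors_eq_of_one_mem {μ : Measure Ω} {w s : ℕ → ℝ} (hw : ∀ i, 1 ≤ i → 0 < w i)
    (hs : ∀ i, s i = ∑ j ∈ Icc 1 i, w j)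
    (hmeas : ∀ m, Measurable (par m)) (humeas : Measurable u)
    (hpar : ∀ ω, IsParentMap (par · ω) n) (hu : ∀ ω, u ω ∈ Icc 1 n)
    (hlaw : ∀ π : ℕ → ℕ, (∀ m, 2 ≤ m → m ≤ n → 1 ≤ π m ∧ π m < m) →
      ∀ j, 1 ≤ j → j ≤ n →
        μ {ω | (∀ m ∈ Icc 2 n, par m ω = π m) ∧ u ω = j}
          = (∏ m ∈ Icc 2 n, ENNReal.ofReal (w (π m) / s (m - 1))) * ENNReal.ofReal (w j / s n))
    {S : Finset ℕ} (hS1 : 1 ∈ S) (hSn : S ⊆ Icc 1 n) :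
    μ {ω | ancestors (par · ω) n (u ω) = S}
      = ENNReal.ofReal ((∏ m ∈ Icc 2 n, ∑ v ∈ compatibleParents S m, w v / s (m - 1))
          * (w (S.max' ⟨1, hS1⟩) / s n)) := by
  set j := S.max' ⟨1, hS1⟩
  have hj : j ∈ Icc 1 n := hSn (S.max'_mem _)
  have hevent : {ω | ancestors (par · ω) n (u ω) = S}
      = {ω | ∀ m ∈ Icc 2 n, par m ω ∈ compatibleParents S m} ∩ {ω | u ω = j} := by
    ext ω
    exact (hpar ω).ancestors_eq_iff_compatibleParents (hu ω) hS1 hSn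
  have hcompat : ∀ m ∈ Icc 2 n, ∀ v ∈ compatibleParents S m, 1 ≤ v ∧ v < m := fun m hm v hv => by
    have := mem_Icc.1 (compatibleParents_subset hS1 (mem_Icc.1 hm).1 hv)
    omega
  have hweight : ∀ m ∈ Icc 2 n, ∀ v ∈ compatibleParents S m, 0 ≤ w v / s (m - 1) :=
    fun m hm v hv => div_nonneg (hw v (hcompat m hm v hv).1).le (partialSum_nonneg hw hs _)
  have hsum : ∀ m ∈ Icc 2 n, 0 ≤ ∑ v ∈ compatibleParents S m, w v / s (m - 1) :=
    fun m hm => sum_nonneg (hweight m hm)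
  rw [hevent, measure_forall_mem_inter_eq_prod_sum (E := {ω | u ω = j}) hmeas
    (humeas (measurableSet_singleton j))
    (Icc 2 n) (compatibleParents S) (fun m v => ENNReal.ofReal (w v / s (m - 1)))
    (ENNReal.ofReal (w j / s n)) fun π hπ => hlaw π (fun m hm2 hmn => hcompat m (mem_Icc.2 ⟨hm2, hmn⟩) _
      (hπ m (mem_Icc.2 ⟨hm2, hmn⟩))) j (mem_Icc.1 hj).1 (mem_Icc.1 hj).2,
    ENNReal.ofReal_mul (prod_nonneg hsum), ENNReal.ofReal_prod_of_nonneg hsum]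
  exact congrArg (· * _)
    (prod_congr rfl fun m hm => (ENNReal.ofReal_sum_of_nonneg (hweight m hm)).symm)

theorem measure_ancestors_eq {μ : Measure Ω} {w s : ℕ → ℝ} (hw : ∀ i, 1 ≤ i → 0 < w i)
    (hs : ∀ i, s i = ∑ j ∈ Icc 1 i, w j) (hn : 1 ≤ n)
    (hmeas : ∀ m, Measurable (par m)) (humeas : Measurable u)
    (hpar : ∀ ω, IsParentMap (par · ω) n) (hu : ∀ ω, u ω ∈ Icc 1 n)
    (hlaw : ∀ π : ℕ → ℕ, (∀ m, 2 ≤ m → m ≤ n → 1 ≤ π m ∧ π m < m) →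
      ∀ j, 1 ≤ j → j ≤ n →
        μ {ω | (∀ m ∈ Icc 2 n, par m ω = π m) ∧ u ω = j}
          = (∏ m ∈ Icc 2 n, ENNReal.ofReal (w (π m) / s (m - 1))) * ENNReal.ofReal (w j / s n))
    {S : Finset ℕ} (hSn : S ⊆ Icc 1 n) :
    μ {ω | ancestors (par · ω) n (u ω) = S}
      = (∏ i ∈ S, ENNReal.ofReal (w i / s i))
        * ∏ i ∈ Icc 1 n \ S, (1 - ENNReal.ofReal (w i / s i)) := by
  by_cases hS1 : 1 ∈ S
  · have hone_le : ∀ i ∈ Icc 1 n \ S, 1 ≤ i := fun i hi => (mem_Icc.1 (mem_sdiff.1 hi).1).1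
    rw [measure_ancestors_eq_of_one_mem hw hs hmeas humeas hpar hu hlaw hS1 hSn,
      prod_sum_compatibleParents_mul hw hs hS1 hSn, ENNReal.ofReal_prod_mul_prod_one_sub
        (fun i hi => div_partialSum_nonneg hw hs (mem_Icc.1 (hSn hi)).1)
        fun i hi => ⟨div_partialSum_nonneg hw hs (hone_le i hi),
          div_partialSum_le_one hw hs (hone_le i hi)⟩]
  · have hempty : {ω | ancestors (par · ω) n (u ω) = S} = ∅ :=
      Set.eq_empty_of_forall_notMem fun ω h => hS1 (h ▸ (hpar ω).one_mem_ancestors (hu ω))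
    have hp1 : w 1 / s 1 = 1 := by
      rw [hs, Icc_self, sum_singleton, div_self (hw 1 le_rfl).ne']
    rw [hempty, measure_empty, prod_eq_zero (i := 1) (mem_sdiff.2 ⟨mem_Icc.2 ⟨le_rfl, hn⟩, hS1⟩)
      (by rw [hp1, ENNReal.ofReal_one, tsub_self]), mul_zero]

end WRRT

theorem natCast_eq_indicator_of_le_one {Ω : Type*} {X : Ω → ℕ} (hX : ∀ ω, X ω ≤ 1) :
    (fun ω => (X ω : ℝ)) = {ω | X ω = 1}.indicator 1 := by
  ext ω
  rcases Nat.le_one_iff_eq_zero_or_eq_one.1 (hX ω) with h | h <;> simp [h]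

theorem sum_eq_card_filter_eq_one {ι : Type*} {f : ι → ℕ} (hf : ∀ i, f i ≤ 1) (A : Finset ι) :
    ∑ i ∈ A, f i = (A.filter (fun i => f i = 1)).card := by
  rw [card_filter]
  refine sum_congr rfl fun i _ => ?_
  have := hf i
  split_ifs <;> omega

section Bernoulli

variable {Ω ι : Type*} [MeasurableSpace Ω] {μ : Measure Ω}

theorem integral_natCast_of_le_one {X : Ω → ℕ} (hmeas : Measurable X) (hX : ∀ ω, X ω ≤ 1) :
    ∫ ω, (X ω : ℝ) ∂μ = μ.real {ω | X ω = 1} := by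
  rw [natCast_eq_indicator_of_le_one hX]
  exact integral_indicator_one (hmeas (measurableSet_singleton 1))

theorem memLp_natCast_of_le_one [IsFiniteMeasure μ] {X : Ω → ℕ} (hmeas : Measurable X)
    (hX : ∀ ω, X ω ≤ 1) (p : ℝ≥0∞) : MemLp (fun ω => (X ω : ℝ)) p μ := by
  rw [natCast_eq_indicator_of_le_one hX]
  exact memLp_indicator_const p (hmeas (measurableSet_singleton 1)) 1
    (Or.inr (measure_ne_top _ _))

theorem variance_natCast_of_le_one [IsProbabilityMeasure μ] {X : Ω → ℕ} (hmeas : Measurable X)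
    (hX : ∀ ω, X ω ≤ 1) :
    Var[fun ω => (X ω : ℝ); μ] = μ.real {ω | X ω = 1} * (1 - μ.real {ω | X ω = 1}) := by
  have hsq : (fun ω => (X ω : ℝ)) ^ 2 = fun ω => (X ω : ℝ) := by
    ext ω
    rcases Nat.le_one_iff_eq_zero_or_eq_one.1 (hX ω) with h | h <;> simp [h]
  rw [variance_eq_sub (memLp_natCast_of_le_one hmeas hX 2), hsq,
    integral_natCast_of_le_one hmeas hX]
  ring

variable {β : ι → Ω → ℕ}

theorem measurable_filter_eq_one (hmeas : ∀ i, Measurable (β i)) (A : Finset ι) :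
    Measurable fun ω => A.filter (fun i => β i ω = 1) := by
  rw [measurable_finset_iff]
  intro a
  simp only [mem_filter]
  fun_prop

theorem ProbabilityTheory.iIndepFun.measure_filter_eq_one_eq [DecidableEq ι]
    [IsProbabilityMeasure μ] (hmeas : ∀ i, Measurable (β i)) (hind : iIndepFun β μ)
    {A S : Finset ι} {p : ι → ℝ≥0∞} (hp : ∀ i ∈ A, μ {ω | β i ω = 1} = p i) (hSA : S ⊆ A) :
    μ {ω | A.filter (fun i => β i ω = 1) = S} = (∏ i ∈ S, p i) * ∏ i ∈ A \ S, (1 - p i) := by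
  let t (i : ι) : Set ℕ := if i ∈ S then {1} else {1}ᶜ
  have hevent : {ω | A.filter (fun i => β i ω = 1) = S} = ⋂ i ∈ A, β i ⁻¹' t i := by
    ext ω
    simp only [Set.mem_ofPred_eq, Set.mem_iInter, Set.mem_preimage, t]
    constructor
    · rintro rfl i hi
      split_ifs with h <;> simp_all
    · intro h
      ext i
      have := h i
      have := @hSA i
      by_cases hiS : i ∈ S <;> simp_all
  have ht : ∀ i ∈ A, μ (β i ⁻¹' t i) = if i ∈ S then p i else 1 - p i := by
    intro i hi
    rw [← hp i hi]
    simp only [t]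
    split_ifs
    · rfl
    · rw [Set.preimage_compl, measure_compl (hmeas i (measurableSet_singleton 1))
        (measure_ne_top _ _), measure_univ]
      rfl
  rw [hevent, hind.meas_biInter fun i _ => ⟨t i, .of_discrete, rfl⟩, prod_congr rfl ht, prod_ite,
    filter_mem_eq_inter, inter_eq_right.2 hSA, filter_not, filter_mem_eq_inter,
    inter_eq_right.2 hSA]

theorem integrable_natCast_sum_of_le_one [IsFiniteMeasure μ] (hmeas : ∀ i, Measurable (β i))
    (hβ : ∀ i ω, β i ω ≤ 1) (A : Finset ι) :
    Integrable (fun ω => ((∑ i ∈ A, β i ω : ℕ) : ℝ)) μ := by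
  simp only [Nat.cast_sum]
  exact integrable_finsetSum A fun i _ =>
    memLp_one_iff_integrable.1 (memLp_natCast_of_le_one (hmeas i) (hβ i) 1)

theorem integral_natCast_sum_of_le_one [IsFiniteMeasure μ] (hmeas : ∀ i, Measurable (β i))
    (hβ : ∀ i ω, β i ω ≤ 1) {A : Finset ι} {p : ι → ℝ}
    (hp : ∀ i ∈ A, μ.real {ω | β i ω = 1} = p i) :
    ∫ ω, ((∑ i ∈ A, β i ω : ℕ) : ℝ) ∂μ = ∑ i ∈ A, p i := by
  simp only [Nat.cast_sum]
  rw [integral_finsetSum A fun i _ =>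
    memLp_one_iff_integrable.1 (memLp_natCast_of_le_one (hmeas i) (hβ i) 1)]
  exact sum_congr rfl fun i hi => (integral_natCast_of_le_one (hmeas i) (hβ i)).trans (hp i hi)

theorem ProbabilityTheory.iIndepFun.variance_natCast_sum_of_le_one [IsProbabilityMeasure μ]
    (hmeas : ∀ i, Measurable (β i)) (hind : iIndepFun β μ) (hβ : ∀ i ω, β i ω ≤ 1)
    {A : Finset ι} {p : ι → ℝ} (hp : ∀ i ∈ A, μ.real {ω | β i ω = 1} = p i) :
    Var[fun ω => ((∑ i ∈ A, β i ω : ℕ) : ℝ); μ] = ∑ i ∈ A, p i * (1 - p i) := by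
  have hsum : (fun ω => ((∑ i ∈ A, β i ω : ℕ) : ℝ)) = ∑ i ∈ A, fun ω => (β i ω : ℝ) := by
    ext ω
    simp
  rw [hsum, IndepFun.variance_sum (fun i _ => memLp_natCast_of_le_one (hmeas i) (hβ i) 2)
    fun i _ j _ hij => (hind.indepFun hij).comp (measurable_of_countable _)
      (measurable_of_countable _)]
  exact sum_congr rfl fun i hi => by rw [variance_natCast_of_le_one (hmeas i) (hβ i), hp i hi]

end Bernoulli

theorem identDistrib_of_measure_eq {Ω Ω' ι : Type*} [MeasurableSpace Ω] [MeasurableSpace Ω']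
    [Countable ι] {μ : Measure Ω} {μ' : Measure Ω'} {D : Ω → Finset ι} {D' : Ω' → Finset ι}
    (hD : Measurable D) (hD' : Measurable D') (A : Finset ι) (hDA : ∀ ω, D ω ⊆ A)
    (hD'A : ∀ ω', D' ω' ⊆ A) (h : ∀ S ⊆ A, μ {ω | D ω = S} = μ' {ω' | D' ω' = S}) :
    IdentDistrib D D' μ μ' := by
  refine ⟨hD.aemeasurable, hD'.aemeasurable, Measure.ext_iff_singleton.2 fun S => ?_⟩
  rw [Measure.map_apply hD (measurableSet_singleton S),
    Measure.map_apply hD' (measurableSet_singleton S)]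
  by_cases hS : S ⊆ A
  · exact h S hS
  · have hD0 : D ⁻¹' {S} = ∅ := Set.eq_empty_of_forall_notMem fun ω h => hS (h ▸ hDA ω)
    have hD'0 : D' ⁻¹' {S} = ∅ := Set.eq_empty_of_forall_notMem fun ω' h => hS (h ▸ hD'A ω')
    rw [hD0, hD'0, measure_empty, measure_empty]

theorem wrrt_height_of_weighted_node_general
    {Ω : Type*} [MeasurableSpace Ω] (μ : Measure Ω)
    {Ω' : Type*} [MeasurableSpace Ω'] (μ' : Measure Ω') [IsProbabilityMeasure μ']
    (w : ℕ → ℝ) (hw : ∀ i, 1 ≤ i → 0 < w i)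
    (s : ℕ → ℝ) (hs : ∀ i, s i = ∑ j ∈ Finset.Icc 1 i, w j)
    (n : ℕ) (hn : 1 ≤ n)
    (par : ℕ → Ω → ℕ) (u : Ω → ℕ)
    (hmeas : ∀ m, Measurable (par m)) (humeas : Measurable u)
    (hpar1 : ∀ ω, par 1 ω = 1)
    (hparlt : ∀ m, 2 ≤ m → m ≤ n → ∀ ω, 1 ≤ par m ω ∧ par m ω < m)
    (hurange : ∀ ω, 1 ≤ u ω ∧ u ω ≤ n)
    (hlaw : ∀ π : ℕ → ℕ, (∀ m, 2 ≤ m → m ≤ n → 1 ≤ π m ∧ π m < m) →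
      ∀ j, 1 ≤ j → j ≤ n →
        μ {ω | (∀ m ∈ Finset.Icc 2 n, par m ω = π m) ∧ u ω = j}
          = (∏ m ∈ Finset.Icc 2 n, ENNReal.ofReal (w (π m) / s (m - 1)))
            * ENNReal.ofReal (w j / s n))
    -- the height of `u`: (number of non-strict ancestors of `u`) minus one
    (H : Ω → ℕ)
    (hH : ∀ ω, H ω =
      ((Finset.Icc 1 n).filter (fun i => isAnc (fun m => par m ω) i (u ω))).card - 1)
    -- an auxiliary family of `n` independent Bernoulli variables with parameters `w i / s i`
    (β : ℕ → Ω' → ℕ)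
    (hβmeas : ∀ i, Measurable (β i))
    (hβindep : iIndepFun β μ')
    (hβval : ∀ i ω', β i ω' ≤ 1)
    (hβlaw : ∀ i, 1 ≤ i → i ≤ n → μ' {ω' | β i ω' = 1} = ENNReal.ofReal (w i / s i)) :
    Measure.map (fun ω => H ω + 1) μ
        = Measure.map (fun ω' => ∑ i ∈ Finset.Icc 1 n, β i ω') μ'
    ∧ (∫ ω, (H ω : ℝ) ∂μ) + 1 = ∑ i ∈ Finset.Icc 1 n, w i / s i
    ∧ ProbabilityTheory.variance (fun ω => (H ω : ℝ)) μ
        = ∑ i ∈ Finset.Icc 1 n, (w i / s i) * (1 - w i / s i) := by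
  have hpar : ∀ ω, IsParentMap (par · ω) n :=
    fun ω => ⟨hpar1 ω, fun m hm2 hmn => hparlt m hm2 hmn ω⟩
  have hu : ∀ ω, u ω ∈ Icc 1 n := fun ω => mem_Icc.2 (hurange ω)
  have hβlaw' : ∀ i ∈ Icc 1 n, μ' {ω' | β i ω' = 1} = ENNReal.ofReal (w i / s i) :=
    fun i hi => hβlaw i (mem_Icc.1 hi).1 (mem_Icc.1 hi).2
  have hβreal : ∀ i ∈ Icc 1 n, μ'.real {ω' | β i ω' = 1} = w i / s i := fun i hi => by
    rw [measureReal_def, hβlaw' i hi,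
      ENNReal.toReal_ofReal (div_partialSum_nonneg hw hs (mem_Icc.1 hi).1)]
  have hancestors : IdentDistrib (fun ω => ancestors (par · ω) n (u ω))
      (fun ω' => (Icc 1 n).filter (fun i => β i ω' = 1)) μ μ' :=
    identDistrib_of_measure_eq (measurable_ancestors hmeas humeas hpar hu)
      (measurable_filter_eq_one hβmeas _) (Icc 1 n) (fun _ => filter_subset _ _)
      (fun _ => filter_subset _ _) fun S hS => by
        rw [measure_ancestors_eq hw hs hn hmeas humeas hpar hu hlaw hS,
          hβindep.measure_filter_eq_one_eq hβmeas hβlaw' hS]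
  have hcard : IdentDistrib (fun ω => H ω + 1) (fun ω' => ∑ i ∈ Icc 1 n, β i ω') μ μ' := by
    convert hancestors.comp (measurable_of_countable card) using 1 <;> ext ω
    · rw [hH]
      exact Nat.sub_add_cancel (card_pos.2 ⟨1, (hpar ω).one_mem_ancestors (hu ω)⟩)
    · exact sum_eq_card_filter_eq_one (hβval · ω) _
  have hheight : IdentDistrib (fun ω => (H ω : ℝ))
      (fun ω' => ((∑ i ∈ Icc 1 n, β i ω' : ℕ) : ℝ) - 1) μ μ' := by
    convert hcard.comp (measurable_of_countable fun k : ℕ => (k : ℝ) - 1) using 1 <;>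
      ext <;> simp
  have hint := integrable_natCast_sum_of_le_one (μ := μ') hβmeas hβval (Icc 1 n)
  refine ⟨hcard.map_eq, ?_, ?_⟩
  · rw [hheight.integral_eq, integral_sub hint (integrable_const 1),
      integral_natCast_sum_of_le_one hβmeas hβval hβreal]
    simp
  · rw [hheight.variance_eq, variance_sub_const hint.aestronglyMeasurable,
      hβindep.variance_natCast_sum_of_le_one hβmeas hβval hβreal]

/-- **Height of a weight-proportional node in the WRRT.**
With `par` the parent map of the `n`-node `w`-WRRT and `u` a weight-proportional random node
(their joint law being the WRRT law times `w j / s n`), the height `|u|` of `u` satisfies: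
`|u| + 1` is distributed as a sum of `n` independent Bernoulli random variables with
parameters `w i / s i`, `E[|u|] + 1 = ∑_{i=1}^n w i / s i`, and
`Var(|u|) = ∑_{i=1}^n (w i / s i)(1 - w i / s i)`. -/
theorem wrrt_height_of_weighted_node
    {Ω : Type*} [MeasurableSpace Ω] (μ : Measure Ω) [IsProbabilityMeasure μ]
    {Ω' : Type*} [MeasurableSpace Ω'] (μ' : Measure Ω') [IsProbabilityMeasure μ']
    (w : ℕ → ℝ) (hw : ∀ i, 1 ≤ i → 0 < w i)
    (s : ℕ → ℝ) (hs : ∀ i, s i = ∑ j ∈ Finset.Icc 1 i, w j)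
    (n : ℕ) (hn : 1 ≤ n)
    (par : ℕ → Ω → ℕ) (u : Ω → ℕ)
    (hmeas : ∀ m, Measurable (par m)) (humeas : Measurable u)
    (hpar1 : ∀ ω, par 1 ω = 1)
    (hparlt : ∀ m, 2 ≤ m → m ≤ n → ∀ ω, 1 ≤ par m ω ∧ par m ω < m)
    (hurange : ∀ ω, 1 ≤ u ω ∧ u ω ≤ n)
    (hlaw : ∀ π : ℕ → ℕ, (∀ m, 2 ≤ m → m ≤ n → 1 ≤ π m ∧ π m < m) →
      ∀ j, 1 ≤ j → j ≤ n →
        μ {ω | (∀ m ∈ Finset.Icc 2 n, par m ω = π m) ∧ u ω = j}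
          = (∏ m ∈ Finset.Icc 2 n, ENNReal.ofReal (w (π m) / s (m - 1)))
            * ENNReal.ofReal (w j / s n))
    -- the height of `u`: (number of non-strict ancestors of `u`) minus one
    (H : Ω → ℕ)
    (hH : ∀ ω, H ω =
      ((Finset.Icc 1 n).filter (fun i => isAnc (fun m => par m ω) i (u ω))).card - 1)
    -- an auxiliary family of `n` independent Bernoulli variables with parameters `w i / s i`
    (β : ℕ → Ω' → ℕ)
    (hβmeas : ∀ i, Measurable (β i))
    (hβindep : iIndepFun β μ')
    (hβval : ∀ i ω', β i ω' ≤ 1)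
    (hβlaw : ∀ i, 1 ≤ i → i ≤ n → μ' {ω' | β i ω' = 1} = ENNReal.ofReal (w i / s i)) :
    Measure.map (fun ω => H ω + 1) μ
        = Measure.map (fun ω' => ∑ i ∈ Finset.Icc 1 n, β i ω') μ'
    ∧ (∫ ω, (H ω : ℝ) ∂μ) + 1 = ∑ i ∈ Finset.Icc 1 n, w i / s i
    ∧ ProbabilityTheory.variance (fun ω => (H ω : ℝ)) μ
        = ∑ i ∈ Finset.Icc 1 n, (w i / s i) * (1 - w i / s i) :=
  wrrt_height_of_weighted_node_general μ μ' w hw s hs n hn par u hmeas humeas hpar1 hparlt hurange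
    hlaw H hH β hβmeas hβindep hβval hβlaw
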